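/- arXiv:2512.03628 — 5 statements merged into one kernel-verified Lean document; each statement's English description precedes it below -/
import Mathlib

section
/- The Stieltjes transform of the semicircular law on [-r,r], i.e. the measure with density (2/(π r²))·√(r²−x²) on [−r,r], satisfies the algebraic equation S(z) = 1/(z − (r/2)²·S(z)) for all z in the upper half-plane. -/
/-!
Substituting `x = r cos θ` gives `∫₋ᵣʳ √(r² - x²) / (z - x) dx = π z + (r² - z²) J(z)` with
`J(z) = ∫₀^π dθ / (z - r cos θ)`. Differentiating under the integral sign, and integrating
`d/dθ (r sin θ / (z - r cos θ))` over `[0, π]`, shows that `(z² - r²) J(z)²` has derivative zero on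
the upper half-plane. Along `z = iy`, `y → ∞`, one has `z J(z) → π` and `J(z) → 0`, so this
constant is `π²`, and the quadratic equation for the Stieltjes transform is then algebra.
-/

open MeasureTheory Real

/-- The semicircular law on `[-r, r]`: density `(2/(π r²))·√(r²−x²)` on `[−r, r]`. -/
noncomputable def semicircleMeasure (r : ℝ) : Measure ℝ :=
  volume.withDensity fun x =>
    ENNReal.ofReal (if x ∈ Set.Icc (-r) r then (2 / (π * r ^ 2)) * Real.sqrt (r ^ 2 - x ^ 2) else 0)

/-- The Stieltjes transform of a measure on ℝ. -/
noncomputable def stieltjes (μ : Measure ℝ) (z : ℂ) : ℂ :=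
  ∫ x : ℝ, (z - (x : ℂ))⁻¹ ∂μ

open Filter Topology

namespace Complex

theorem abs_im_le_norm_sub_ofReal (z : ℂ) (t : ℝ) : |z.im| ≤ ‖z - t‖ := by
  simpa using abs_im_le_norm (z - t)

theorem sub_ofReal_ne_zero {z : ℂ} (hz : z.im ≠ 0) (t : ℝ) : z - t ≠ 0 :=
  fun h => hz (by simpa using congrArg im h)

theorem norm_inv_sub_ofReal_le {z : ℂ} (hz : 0 < z.im) (t : ℝ) : ‖(z - t)⁻¹‖ ≤ z.im⁻¹ := by
  rw [norm_inv]
  exact inv_anti₀ hz ((le_abs_self _).trans (abs_im_le_norm_sub_ofReal z t))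

end Complex

open Complex

theorem continuous_inv_sub_ofReal {f : ℝ → ℝ} (hf : Continuous f) {z : ℂ} (hz : z.im ≠ 0) :
    Continuous fun θ => (z - f θ)⁻¹ :=
  (continuous_const.sub (continuous_ofReal.comp hf)).inv₀ fun _ => sub_ofReal_ne_zero hz _

theorem hasDerivAt_intervalIntegral_inv_sub_ofReal {f : ℝ → ℝ} (hf : Continuous f) (a b : ℝ)
    {z : ℂ} (hz : 0 < z.im) :
    HasDerivAt (fun w : ℂ => ∫ θ in a..b, (w - f θ)⁻¹) (-∫ θ in a..b, ((z - f θ) ^ 2)⁻¹) z := by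
  set s := {w : ℂ | z.im / 2 < w.im}
  have hzs : z ∈ s := show z.im / 2 < z.im by linarith
  have hs : s ∈ 𝓝 z := (isOpen_lt continuous_const continuous_im).mem_nhds hzs
  have hpos : ∀ w ∈ s, 0 < w.im := fun w hw => lt_trans (by linarith) hw
  have hcont : ∀ w ∈ s, Continuous fun θ => (w - f θ)⁻¹ := fun w hw =>
    continuous_inv_sub_ofReal hf (hpos w hw).ne'
  rw [← intervalIntegral.integral_neg]
  refine (intervalIntegral.hasDerivAt_integral_of_dominated_loc_of_deriv_le
    (F := fun (w : ℂ) θ => (w - f θ)⁻¹) (F' := fun (w : ℂ) θ => -((w - f θ) ^ 2)⁻¹)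
    (bound := fun _ => (z.im / 2)⁻¹ ^ 2) hs ?_ ((hcont z hzs).intervalIntegrable _ _) ?_ ?_
    intervalIntegrable_const ?_).2
  · filter_upwards [hs] with w hw using (hcont w hw).aestronglyMeasurable
  · refine (((hcont z hzs).pow 2).neg.congr fun θ => ?_).aestronglyMeasurable
    rw [Pi.neg_apply, Pi.pow_apply, inv_pow]
  · refine .of_forall fun θ _ w hw => ?_
    rw [norm_neg, ← inv_pow, norm_pow]
    gcongr
    exact (norm_inv_sub_ofReal_le (hpos w hw) _).trans (inv_anti₀ (by linarith) hw.le)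
  · exact .of_forall fun θ _ w hw =>
      (hasDerivAt_inv (sub_ofReal_ne_zero (hpos w hw).ne' _)).comp_sub_const w (f θ : ℂ)

theorem integral_withDensity_ofReal_ite_Icc {E : Type*} [NormedAddCommGroup E] [NormedSpace ℝ E]
    {a b : ℝ} (hab : a ≤ b) {d : ℝ → ℝ} (hd : Measurable d)
    (hd_nonneg : ∀ x ∈ Set.Icc a b, 0 ≤ d x) (g : ℝ → E) :
    ∫ x, g x ∂volume.withDensity (fun x => ENNReal.ofReal (if x ∈ Set.Icc a b then d x else 0))
      = ∫ x in a..b, d x • g x := by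
  have hf : Measurable fun x => ENNReal.ofReal (if x ∈ Set.Icc a b then d x else 0) :=
    (hd.ite measurableSet_Icc measurable_const).ennreal_ofReal
  rw [integral_withDensity_eq_integral_toReal_smul hf
    (.of_forall fun _ => ENNReal.ofReal_lt_top), intervalIntegral.integral_of_le hab,
    ← integral_Icc_eq_integral_Ioc, ← integral_indicator measurableSet_Icc]
  congr 1 with x
  by_cases hx : x ∈ Set.Icc a b
  · simp [hx, hd_nonneg x hx]
  · simp [hx]

/-- `π` times the Stieltjes transform of the arcsine law on `[-r, r]`, written in the
parametrisation `x = r cos θ`. -/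
noncomputable def arcsineTransform (r : ℝ) (z : ℂ) : ℂ :=
  ∫ θ in (0 : ℝ)..π, (z - ↑(r * Real.cos θ))⁻¹

theorem mul_arcsineTransform (r : ℝ) {z : ℂ} (hz : z.im ≠ 0) :
    z * arcsineTransform r z
      = (z ^ 2 - r ^ 2) * ∫ θ in (0 : ℝ)..π, ((z - ↑(r * Real.cos θ)) ^ 2)⁻¹ := by
  set u : ℝ → ℂ := fun θ => z - ↑(r * Real.cos θ)
  have hu : ∀ θ, u θ ≠ 0 := fun θ => sub_ofReal_ne_zero hz _
  have hu_inv : Continuous fun θ => (u θ)⁻¹ := continuous_inv_sub_ofReal (by fun_prop) hz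
  have hu_inv_sq : Continuous fun θ => (u θ ^ 2)⁻¹ := by
    simpa only [inv_pow] using hu_inv.fun_pow 2
  -- `θ ↦ -r sin θ / (z - r cos θ)` is an antiderivative vanishing at both ends
  have hderiv : ∀ θ, HasDerivAt (fun θ => ↑(-(r * Real.sin θ)) / u θ)
      (z * (u θ)⁻¹ + ((r : ℂ) ^ 2 - z ^ 2) * (u θ ^ 2)⁻¹) θ := by
    intro θ
    have hsin : HasDerivAt (fun θ : ℝ => ((-(r * Real.sin θ) : ℝ) : ℂ)) ↑(-(r * Real.cos θ)) θ :=
      ((Real.hasDerivAt_sin θ).const_mul r).neg.ofReal_comp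
    have hcos : HasDerivAt u ↑(r * Real.sin θ) θ :=
      (((Real.hasDerivAt_cos θ).const_mul r).ofReal_comp.const_sub z).congr_deriv
        (by push_cast; ring)
    refine (hsin.fun_div hcos (hu θ)).congr_deriv ?_
    field_simp [hu θ]
    simp only [u]
    push_cast
    linear_combination (r : ℂ) ^ 2 * Complex.sin_sq_add_cos_sq (θ : ℂ)
  have hFTC := intervalIntegral.integral_eq_sub_of_hasDerivAt (fun θ _ => hderiv θ)
    ((by fun_prop : Continuous fun θ => z * (u θ)⁻¹ + ((r : ℂ) ^ 2 - z ^ 2) * (u θ ^ 2)⁻¹)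
      |>.intervalIntegrable 0 π)
  rw [intervalIntegral.integral_add ((hu_inv.const_mul z).intervalIntegrable 0 π)
    ((hu_inv_sq.const_mul _).intervalIntegrable 0 π), intervalIntegral.integral_const_mul,
    intervalIntegral.integral_const_mul] at hFTC
  simp only [Real.sin_pi, Real.sin_zero, mul_zero, neg_zero, ofReal_zero, zero_div,
    sub_zero] at hFTC
  rw [arcsineTransform]
  linear_combination hFTC

theorem hasDerivAt_arcsineTransform (r : ℝ) {z : ℂ} (hz : 0 < z.im) :
    HasDerivAt (arcsineTransform r)
      (-∫ θ in (0 : ℝ)..π, ((z - ↑(r * Real.cos θ)) ^ 2)⁻¹) z :=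
  hasDerivAt_intervalIntegral_inv_sub_ofReal (by fun_prop) 0 π hz

theorem hasDerivAt_sq_sub_sq_mul_arcsineTransform_sq (r : ℝ) {z : ℂ} (hz : 0 < z.im) :
    HasDerivAt (fun w => (w ^ 2 - r ^ 2) * arcsineTransform r w ^ 2) 0 z := by
  refine (((hasDerivAt_pow 2 z).sub_const _).mul
    ((hasDerivAt_arcsineTransform r hz).fun_pow 2)).congr_deriv ?_
  simp only [Nat.cast_ofNat, Nat.add_one_sub_one, pow_one]
  linear_combination 2 * arcsineTransform r z * mul_arcsineTransform r hz.ne'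

theorem sq_sub_sq_mul_arcsineTransform_sq_eq (r : ℝ) {z w : ℂ} (hz : 0 < z.im) (hw : 0 < w.im) :
    (z ^ 2 - r ^ 2) * arcsineTransform r z ^ 2 = (w ^ 2 - r ^ 2) * arcsineTransform r w ^ 2 :=
  (isOpen_lt continuous_const continuous_im).is_const_of_deriv_eq_zero
    (convex_halfSpace_im_gt 0).isPreconnected
    (fun _ hx => (hasDerivAt_sq_sub_sq_mul_arcsineTransform_sq r hx).differentiableAt
      |>.differentiableWithinAt)
    (fun _ hx => (hasDerivAt_sq_sub_sq_mul_arcsineTransform_sq r hx).deriv) hz hw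

theorem norm_arcsineTransform_le (r : ℝ) {z : ℂ} (hz : 0 < z.im) :
    ‖arcsineTransform r z‖ ≤ π / z.im := by
  have := intervalIntegral.norm_integral_le_of_norm_le_const (a := 0) (b := π)
    fun θ _ => norm_inv_sub_ofReal_le hz (r * Real.cos θ)
  rwa [sub_zero, abs_of_pos pi_pos, inv_mul_eq_div] at this

theorem norm_mul_arcsineTransform_sub_pi_le (r : ℝ) {z : ℂ} (hz : 0 < z.im) :
    ‖z * arcsineTransform r z - π‖ ≤ |r| * π / z.im := by
  have hint : z * arcsineTransform r z - π
      = ∫ θ in (0 : ℝ)..π, ↑(r * Real.cos θ) * (z - ↑(r * Real.cos θ))⁻¹ := by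
    have hinv : Continuous fun θ => (z - ↑(r * Real.cos θ))⁻¹ :=
      continuous_inv_sub_ofReal (by fun_prop) hz.ne'
    rw [arcsineTransform, ← intervalIntegral.integral_const_mul, ← mul_one (π : ℂ),
      ← sub_zero π, ← real_smul, ← intervalIntegral.integral_const, sub_zero,
      ← intervalIntegral.integral_sub ((hinv.const_mul z).intervalIntegrable 0 π)
        intervalIntegrable_const]
    refine intervalIntegral.integral_congr fun θ _ => ?_
    have hne := sub_ofReal_ne_zero hz.ne' (r * Real.cos θ)
    field_simp
    ring
  rw [hint]
  have := intervalIntegral.norm_integral_le_of_norm_le_const (a := 0) (b := π)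
    (C := |r| * z.im⁻¹) (f := fun θ => ↑(r * Real.cos θ) * (z - ↑(r * Real.cos θ))⁻¹)
    fun θ _ => by
      rw [norm_mul, norm_real, norm_mul, Real.norm_eq_abs, Real.norm_eq_abs]
      gcongr
      · exact mul_le_of_le_one_right (abs_nonneg r) (abs_cos_le_one θ)
      · exact norm_inv_sub_ofReal_le hz _
  rwa [sub_zero, abs_of_pos pi_pos, mul_right_comm, ← div_eq_mul_inv] at this

theorem tendsto_arcsineTransform_I_mul_atTop (r : ℝ) :
    Tendsto (fun y : ℝ => arcsineTransform r (I * y)) atTop (𝓝 0) := by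
  refine squeeze_zero_norm' ?_ ((tendsto_const_nhds (x := π)).div_atTop tendsto_id)
  filter_upwards [eventually_gt_atTop 0] with y hy
  simpa using norm_arcsineTransform_le r (z := I * y) (by simpa using hy)

theorem tendsto_I_mul_mul_arcsineTransform_I_mul_atTop (r : ℝ) :
    Tendsto (fun y : ℝ => I * y * arcsineTransform r (I * y)) atTop (𝓝 π) := by
  refine tendsto_sub_nhds_zero_iff.1 (squeeze_zero_norm' ?_
    ((tendsto_const_nhds (x := |r| * π)).div_atTop tendsto_id))
  filter_upwards [eventually_gt_atTop 0] with y hy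
  simpa using norm_mul_arcsineTransform_sub_pi_le r (z := I * y) (by simpa using hy)

theorem sq_sub_sq_mul_arcsineTransform_sq (r : ℝ) {z : ℂ} (hz : 0 < z.im) :
    (z ^ 2 - r ^ 2) * arcsineTransform r z ^ 2 = π ^ 2 := by
  have hlim : Tendsto (fun y : ℝ => ((I * y) ^ 2 - r ^ 2) * arcsineTransform r (I * y) ^ 2)
      atTop (𝓝 (π ^ 2)) := by
    convert ((tendsto_I_mul_mul_arcsineTransform_I_mul_atTop r).pow 2).sub
      (((tendsto_arcsineTransform_I_mul_atTop r).pow 2).const_mul ((r : ℂ) ^ 2)) using 1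
    · ext y
      ring
    · simp
  refine tendsto_nhds_unique (tendsto_const_nhds.congr' ?_) hlim
  filter_upwards [eventually_gt_atTop 0] with y hy
  exact sq_sub_sq_mul_arcsineTransform_sq_eq r hz (by simpa using hy)

theorem sqrt_sq_sub_sq_mul_cos {r : ℝ} (hr : 0 ≤ r) {θ : ℝ} (hθ : θ ∈ Set.Icc 0 π) :
    √(r ^ 2 - (r * Real.cos θ) ^ 2) = r * Real.sin θ := by
  rw [← Real.sqrt_sq (mul_nonneg hr (Real.sin_nonneg_of_mem_Icc hθ))]
  congr 1
  linear_combination -r ^ 2 * Real.sin_sq_add_cos_sq θ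

theorem integral_sqrt_sq_sub_sq_mul_inv_sub {r : ℝ} (hr : 0 ≤ r) {z : ℂ} (hz : z.im ≠ 0) :
    ∫ x in -r..r, (√(r ^ 2 - x ^ 2) : ℂ) * (z - x)⁻¹
      = π * z + (r ^ 2 - z ^ 2) * arcsineTransform r z := by
  have hg : Continuous fun x : ℝ => (√(r ^ 2 - x ^ 2) : ℂ) * (z - x)⁻¹ :=
    (by fun_prop : Continuous fun x : ℝ => (√(r ^ 2 - x ^ 2) : ℂ)).mul
      (continuous_inv_sub_ofReal continuous_id hz)
  have hsubst := intervalIntegral.integral_deriv_smul_comp (a := 0) (b := π)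
    (f := fun θ => r * Real.cos θ) (f' := fun θ => -(r * Real.sin θ))
    (fun θ _ => by simpa using (Real.hasDerivAt_cos θ).const_mul r)
    (by fun_prop : Continuous _).continuousOn hg
  simp only [Real.cos_zero, Real.cos_pi, mul_one, mul_neg, Function.comp_apply, neg_smul,
    intervalIntegral.integral_neg] at hsubst
  rw [intervalIntegral.integral_symm, ← hsubst, neg_neg]
  -- `r² sin² θ = (r² - z²) + (z + r cos θ)(z - r cos θ)`
  have hpoint : ∀ θ ∈ Set.uIcc 0 π,
      (r * Real.sin θ) • ((√(r ^ 2 - (r * Real.cos θ) ^ 2) : ℂ) * (z - ↑(r * Real.cos θ))⁻¹)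
        = ((r : ℂ) ^ 2 - z ^ 2) * (z - ↑(r * Real.cos θ))⁻¹ + (z + ↑(r * Real.cos θ)) := by
    intro θ hθ
    rw [Set.uIcc_of_le pi_pos.le] at hθ
    have hne := sub_ofReal_ne_zero hz (r * Real.cos θ)
    rw [sqrt_sq_sub_sq_mul_cos hr hθ, real_smul]
    field_simp
    push_cast
    linear_combination (r : ℂ) ^ 2 * Complex.sin_sq_add_cos_sq (θ : ℂ)
  have hinv : Continuous fun θ => (z - ↑(r * Real.cos θ))⁻¹ :=
    continuous_inv_sub_ofReal (by fun_prop) hz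
  rw [intervalIntegral.integral_congr hpoint,
    intervalIntegral.integral_add ((hinv.const_mul _).intervalIntegrable 0 π)
      ((by fun_prop : Continuous fun θ : ℝ => z + ↑(r * Real.cos θ)).intervalIntegrable 0 π),
    intervalIntegral.integral_const_mul,
    intervalIntegral.integral_add intervalIntegrable_const
      ((by fun_prop : Continuous fun θ : ℝ => (↑(r * Real.cos θ) : ℂ)).intervalIntegrable 0 π),
    intervalIntegral.integral_ofReal, intervalIntegral.integral_const_mul, integral_cos,
    intervalIntegral.integral_const, arcsineTransform]
  simp only [Real.sin_pi, Real.sin_zero, sub_zero, mul_zero, ofReal_zero, add_zero, real_smul]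
  ring

theorem stieltjes_semicircleMeasure {r : ℝ} (hr : 0 ≤ r) {z : ℂ} (hz : z.im ≠ 0) :
    stieltjes (semicircleMeasure r) z
      = 2 / (π * r ^ 2) * (π * z + (r ^ 2 - z ^ 2) * arcsineTransform r z) := by
  rw [stieltjes, semicircleMeasure,
    integral_withDensity_ofReal_ite_Icc (by linarith) (by fun_prop) (fun x _ => by positivity),
    ← integral_sqrt_sq_sub_sq_mul_inv_sub hr hz,
    ← intervalIntegral.integral_const_mul]
  congr 1 with x
  rw [real_smul]
  push_cast
  ring

theorem stieltjes_semicircle_eq (r : ℝ) (hr : 0 < r) (z : ℂ) (hz : 0 < z.im) :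
    stieltjes (semicircleMeasure r) z
      = 1 / (z - ((r : ℂ) / 2) ^ 2 * stieltjes (semicircleMeasure r) z) := by
  refine eq_one_div_of_mul_eq_one_right ?_
  have hJ := sq_sub_sq_mul_arcsineTransform_sq r hz
  have hr' : (r : ℂ) ≠ 0 := ofReal_ne_zero.2 hr.ne'
  have hπ : (π : ℂ) ≠ 0 := ofReal_ne_zero.2 pi_ne_zero
  rw [stieltjes_semicircleMeasure hr.le hz.ne']
  field_simp
  linear_combination ((r : ℂ) ^ 2 - z ^ 2) * hJ
end

section
/- Let A be an N×N Hermitian complex matrix, let i be an index, let a_i ∈ ℂ^{N−1} be the i-th column of A with its i-th entry removed, and let A^{(i)} be the (N−1)×(N−1) matrix obtained from A by deleting row i and column i. Then for every z ∈ ℂ⁺, the (i,i) entry of the resolvent satisfies (zI_N − A)^{-1}(i,i) = 1/(z − A(i,i) − a_i* (zI_{N−1} − A^{(i)})^{-1} a_i). -/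
/-!
Move index `i` to the last position. Then `z • 1 - A` becomes the block matrix with top-left
block `z • 1 - A⁽ⁱ⁾`, off-diagonal blocks `-aᵢ` and `-aᵢ*`, and corner `z - A i i`, and the corner
entry of the inverse of a block matrix is the inverse of the Schur complement of its top-left
block. That block is invertible because the Hermitian matrix `A⁽ⁱ⁾` has only real eigenvalues,
so `det (z • 1 - A⁽ⁱ⁾) = ∏ (z - λⱼ) ≠ 0` for non-real `z`.
-/

open Matrix Polynomial

theorem Matrix.IsHermitian.isUnit_det_smul_one_sub {𝕜 n : Type*} [RCLike 𝕜] [Fintype n]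
    [DecidableEq n] {A : Matrix n n 𝕜} (hA : A.IsHermitian) {z : 𝕜} (hz : RCLike.im z ≠ 0) :
    IsUnit (z • (1 : Matrix n n 𝕜) - A).det := by
  rw [smul_one_eq_diagonal, ← scalar_apply, ← eval_charpoly, hA.charpoly_eq, eval_prod,
    isUnit_iff_ne_zero, Finset.prod_ne_zero_iff]
  intro j _ h
  apply hz
  simpa using congrArg RCLike.im h

theorem Matrix.toBlocks₂₂_inv_fromBlocks {m n α : Type*} [Fintype m] [Fintype n]
    [DecidableEq m] [DecidableEq n] [CommRing α]
    (A : Matrix m m α) (B : Matrix m n α) (C : Matrix n m α) (D : Matrix n n α)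
    (hA : IsUnit A.det) :
    (fromBlocks A B C D)⁻¹.toBlocks₂₂ = (D - C * A⁻¹ * B)⁻¹ := by
  let := A.invertibleOfIsUnitDet hA
  by_cases hS : IsUnit (D - C * A⁻¹ * B).det
  · let := (D - C * ⅟A * B).invertibleOfIsUnitDet (by simpa [invOf_eq_nonsing_inv] using hS)
    let := fromBlocks₁₁Invertible A B C D
    rw [← invOf_eq_nonsing_inv, invOf_fromBlocks₁₁_eq, toBlocks_fromBlocks₂₂,
      invOf_eq_nonsing_inv, invOf_eq_nonsing_inv]
  · -- `det (fromBlocks A B C D) = det A * det (D - C * A⁻¹ * B)`, so both inverses are junk `0`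
    have hM : ¬IsUnit (fromBlocks A B C D).det := by
      rwa [det_fromBlocks₁₁, invOf_eq_nonsing_inv, IsUnit.mul_iff, not_and_or,
        or_iff_right (not_not.2 hA)]
    rw [nonsing_inv_apply_not_isUnit _ hM, nonsing_inv_apply_not_isUnit _ hS]
    rfl

theorem Matrix.inv_apply_self_eq_inv_schur {K : Type*} [Field K] {n : ℕ}
    (B : Matrix (Fin (n + 1)) (Fin (n + 1)) K) (i : Fin (n + 1))
    (hB : IsUnit (B.submatrix i.succAbove i.succAbove).det) :
    B⁻¹ i i = (B i i - (fun k => B i (i.succAbove k)) ⬝ᵥ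
      (B.submatrix i.succAbove i.succAbove)⁻¹ *ᵥ (fun j => B (i.succAbove j) i))⁻¹ := by
  set D := B.submatrix i.succAbove i.succAbove
  set r : Fin n → K := fun k => B i (i.succAbove k)
  set c : Fin n → K := fun j => B (i.succAbove j) i
  let e : Fin n ⊕ Unit ≃ Fin (n + 1) :=
    ((finSuccEquiv' i).trans (Equiv.optionEquivSumPUnit (Fin n))).symm
  have he : e (.inr ()) = i := by simp [e]
  have hblocks : B.submatrix e e =
      fromBlocks D (replicateCol Unit c) (replicateRow Unit r) (of fun _ _ => B i i) := by
    ext (a | a) (b | b) <;> simp [e, D, r, c, finSuccEquiv'_symm_some]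
  have hschur := congrFun₂ (toBlocks₂₂_inv_fromBlocks D (replicateCol Unit c)
    (replicateRow Unit r) (of fun _ _ => B i i) hB) () ()
  rw [← hblocks, inv_submatrix_equiv, inv_subsingleton (_ : Matrix Unit Unit K),
    Matrix.mul_assoc, ← replicateCol_mulVec] at hschur
  simpa [toBlocks₂₂, he] using hschur

/-- Schur-complement formula for a diagonal entry of the resolvent of a Hermitian matrix. -/
theorem resolvent_diag_entry {N : ℕ} (A : Matrix (Fin (N + 1)) (Fin (N + 1)) ℂ)
    (hA : A.IsHermitian) (i : Fin (N + 1)) (z : ℂ) (hz : 0 < z.im) :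
    (z • (1 : Matrix (Fin (N + 1)) (Fin (N + 1)) ℂ) - A)⁻¹ i i =
      (z - A i i -
        (star (fun j : Fin N => A (i.succAbove j) i)) ⬝ᵥ
          ((z • (1 : Matrix (Fin N) (Fin N) ℂ) - A.submatrix i.succAbove i.succAbove)⁻¹).mulVec
            (fun j : Fin N => A (i.succAbove j) i))⁻¹ := by
  set a : Fin N → ℂ := fun j => A (i.succAbove j) i
  have hminor : (z • 1 - A).submatrix i.succAbove i.succAbove =
      z • 1 - A.submatrix i.succAbove i.succAbove := by
    rw [← submatrix_one (α := ℂ) i.succAbove Fin.succAbove_right_injective]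
    rfl
  have hminor_unit : IsUnit ((z • 1 - A).submatrix i.succAbove i.succAbove).det := by
    rw [hminor]
    exact (hA.submatrix _).isUnit_det_smul_one_sub (by simpa using hz.ne')
  have hrow : (fun k => (z • 1 - A) i (i.succAbove k)) = -star a := by
    ext k
    simp [a, (Fin.succAbove_ne i k).symm, hA.apply]
  have hcol : (fun j => (z • 1 - A) (i.succAbove j) i) = -a := by
    ext j
    simp [a, Fin.succAbove_ne i j]
  rw [inv_apply_self_eq_inv_schur _ i hminor_unit, hminor, hrow, hcol, neg_dotProduct,
    mulVec_neg, dotProduct_neg, neg_neg]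
  simp
end

section
/- Let b be a real random variable with E[b²] < ∞ and let (b_i)_{i≥1} be i.i.d. copies of b. Fix z ∈ ℂ with Im z > E[b²] and suppose E[b²]/(Im z)² < 1. Define the random sequence s_1 = 1/z and s_{i+1} = 1/(z − b_i²·s_i). Then the laws of s_i (as probability measures on ℂ) form a Cauchy sequence for the Wasserstein-1 distance, and hence converge in distribution to a random variable S supported in {w : Im w ≤ 0, |w| ≤ 1/Im z} satisfying S =_d 1/(z − b²·S) with b independent of S on the right-hand side. -/
/-!
Write `F_c w = 1 / (z - c² w)`. Every `F_c` maps `{w | Im w ≤ 0}` into the region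
`D = {w | Im w ≤ 0, ‖w‖ ≤ 1 / Im z}` and is `c² / (Im z)²`-Lipschitz on `{w | Im w ≤ 0}`.
Since the `b_i` are i.i.d., `s_{n+1} = F_{b_n} ∘ ⋯ ∘ F_{b_1} (1 / z)` has the same law as the
backward composition `T_n = F_{b_1} ∘ ⋯ ∘ F_{b_n} (1 / z)`.
Consecutive backward iterates satisfy `‖T_{n+1} - T_n‖ ≤ (2 / Im z) ∏_{i ≤ n} b_i² / (Im z)²`,
whose expectation is `(2 / Im z) qⁿ` with `q = E[b²] / (Im z)² < 1`. So `T_n` converges almost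
surely, hence in `L¹`, to some `S ∈ D`; the `L¹` bound controls the Wasserstein distances and
gives convergence in distribution. Peeling off the outermost map, `S = F_{b_1} S'`, where `S'` is
the same limit built from `(b_{i+1})_i`: it has the law of `S` and is independent of `b_1`.
-/

open MeasureTheory ProbabilityTheory Filter

/-- Wasserstein-1 distance on `ℂ` via the Kantorovich–Rubinstein dual formulation. -/
noncomputable def W1 (μ ν : Measure ℂ) : ℝ :=
  ⨆ f : { f : ℂ → ℝ // LipschitzWith 1 f }, |(∫ x, f.1 x ∂μ) - ∫ x, f.1 x ∂ν|

open Measure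
open scoped Topology ENNReal NNReal

lemma ae_cauchySeq_of_tsum_lintegral_ne_top {α E : Type*} [MeasurableSpace α]
    [PseudoEMetricSpace E] {μ : Measure α} {T : ℕ → α → E} {d : ℕ → α → ℝ≥0∞}
    (hd : ∀ n, AEMeasurable (d n) μ) (hT : ∀ n x, edist (T n x) (T (n + 1) x) ≤ d n x)
    (hsum : ∑' n, ∫⁻ x, d n x ∂μ ≠ ∞) :
    ∀ᵐ x ∂μ, CauchySeq fun n ↦ T n x := by
  rw [← lintegral_tsum hd] at hsum
  filter_upwards [ae_lt_top' (AEMeasurable.tsum hd) hsum] with x hx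
  exact cauchySeq_of_edist_le_of_tsum_ne_top _ (hT · x) hx.ne

lemma LipschitzWith.integrable_comp {α E : Type*} [MeasurableSpace α] [NormedAddCommGroup E]
    {μ : Measure α} [IsFiniteMeasure μ] {K : ℝ≥0} {f : E → ℝ} (hf : LipschitzWith K f)
    {X : α → E} (hX : Integrable X μ) : Integrable (fun ω ↦ f (X ω)) μ := by
  refine ((integrable_const |f 0|).add (hX.norm.const_mul K)).mono'
    (hf.continuous.comp_aestronglyMeasurable hX.1) (ae_of_all _ fun ω ↦ ?_)
  have := hf.dist_le_mul (X ω) 0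
  rw [Real.dist_eq, dist_zero_right] at this
  show |f (X ω)| ≤ |f 0| + K * ‖X ω‖
  linarith [abs_sub_abs_le_abs_sub (f (X ω)) (f 0)]

lemma W1_map_le_integral_norm_sub {α : Type*} [MeasurableSpace α] {μ : Measure α}
    [IsFiniteMeasure μ] {X Y : α → ℂ} (hX : Integrable X μ) (hY : Integrable Y μ) :
    W1 (μ.map X) (μ.map Y) ≤ ∫ ω, ‖X ω - Y ω‖ ∂μ := by
  refine Real.iSup_le (fun f ↦ ?_) (integral_nonneg fun _ ↦ norm_nonneg _)
  have hfX := f.2.integrable_comp hX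
  have hfY := f.2.integrable_comp hY
  rw [integral_map hX.aemeasurable f.2.continuous.aestronglyMeasurable,
    integral_map hY.aemeasurable f.2.continuous.aestronglyMeasurable, ← integral_sub hfX hfY]
  refine abs_integral_le_integral_abs.trans
    (integral_mono (hfX.sub hfY).abs (hX.sub hY).norm fun ω ↦ ?_)
  simpa [Real.dist_eq, dist_eq_norm] using f.2.dist_le_mul (X ω) (Y ω)

namespace ProbabilityTheory.iIndepFun

variable {Ω β : Type*} {mΩ : MeasurableSpace Ω} [MeasurableSpace β] {P : Measure Ω}
  {X : ℕ → Ω → β}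

lemma indepFun_zero_tail (hX : iIndepFun X P) (hmeas : ∀ i, Measurable (X i)) :
    IndepFun (X 0) (fun ω i ↦ X (i + 1) ω) P := by
  have hindep := indep_iSup_of_disjoint (fun i ↦ (hmeas i).comap_le)
    ((iIndepFun_iff_iIndep _ _ _).1 hX)
    (Set.disjoint_singleton_left.2 (Set.self_notMem_Ioi (a := 0)))
  refine indep_of_indep_of_le_right (indep_of_indep_of_le_left hindep ?_) ?_
  · exact le_iSup₂_of_le (f := fun i _ ↦ MeasurableSpace.comap (X i) _) 0 rfl le_rfl
  · refine Measurable.comap_le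
      (@measurable_pi_lambda _ _ _ (⨆ i ∈ Set.Ioi 0, MeasurableSpace.comap (X i) _) _ _
        fun i ↦ ?_)
    exact (comap_measurable (X (i + 1))).mono
      (le_iSup₂ (f := fun i (_ : i ∈ Set.Ioi 0) ↦ MeasurableSpace.comap (X i) _) (i + 1)
        i.succ_pos) le_rfl

lemma map_comp_eq_infinitePi {ν : Measure β} (hX : iIndepFun X P)
    (hmeas : ∀ i, Measurable (X i)) (hlaw : ∀ i, P.map (X i) = ν) {σ : ℕ → ℕ}
    (hσ : σ.Injective) :
    P.map (fun ω i ↦ X (σ i) ω) = infinitePi fun _ ↦ ν := by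
  rw [(hX.precomp hσ).map_fun_eq_infinitePi_map fun i ↦ hmeas (σ i)]
  simp_rw [hlaw]

end ProbabilityTheory.iIndepFun

namespace TridiagResolvent

noncomputable def resolventStep (z : ℂ) (c : ℝ) (w : ℂ) : ℂ := (z - (c : ℂ) ^ 2 * w)⁻¹

def lowerHalfDisk (r : ℝ) : Set ℂ := {w | w.im ≤ 0 ∧ ‖w‖ ≤ r}

lemma isClosed_lowerHalfDisk (r : ℝ) : IsClosed (lowerHalfDisk r) :=
  (isClosed_le Complex.continuous_im continuous_const).inter
    (isClosed_le continuous_norm continuous_const)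

lemma norm_sub_le_of_mem_lowerHalfDisk {r : ℝ} {w w' : ℂ} (hw : w ∈ lowerHalfDisk r)
    (hw' : w' ∈ lowerHalfDisk r) : ‖w - w'‖ ≤ 2 * r := by
  linarith [norm_sub_le w w', hw.2, hw'.2]

section Step

variable {z : ℂ} (hz : 0 < z.im)

lemma im_le_im_sub_sq_mul (c : ℝ) {w : ℂ} (hw : w.im ≤ 0) :
    z.im ≤ (z - (c : ℂ) ^ 2 * w).im := by
  have him : (z - (c : ℂ) ^ 2 * w).im = z.im - c ^ 2 * w.im := by
    simp [← Complex.ofReal_pow]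
  nlinarith [sq_nonneg c]

lemma im_le_norm_sub_sq_mul (c : ℝ) {w : ℂ} (hw : w.im ≤ 0) :
    z.im ≤ ‖z - (c : ℂ) ^ 2 * w‖ :=
  (im_le_im_sub_sq_mul c hw).trans (Complex.im_le_norm _)

include hz

lemma resolventStep_mem (c : ℝ) {w : ℂ} (hw : w.im ≤ 0) :
    resolventStep z c w ∈ lowerHalfDisk (1 / z.im) := by
  refine ⟨?_, ?_⟩
  · rw [resolventStep, Complex.inv_im, neg_div, neg_nonpos]
    exact div_nonneg (hz.trans_le (im_le_im_sub_sq_mul c hw)).le (Complex.normSq_nonneg _)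
  · rw [resolventStep, norm_inv, one_div]
    exact inv_anti₀ hz (im_le_norm_sub_sq_mul c hw)

lemma one_div_mem_lowerHalfDisk : 1 / z ∈ lowerHalfDisk (1 / z.im) := by
  simpa [resolventStep] using resolventStep_mem hz 0 (w := 0) le_rfl

lemma sub_sq_mul_ne_zero (c : ℝ) {w : ℂ} (hw : w.im ≤ 0) : z - (c : ℂ) ^ 2 * w ≠ 0 :=
  norm_pos_iff.1 (hz.trans_le (im_le_norm_sub_sq_mul c hw))

lemma norm_resolventStep_sub_le (c : ℝ) {w w' : ℂ} (hw : w.im ≤ 0) (hw' : w'.im ≤ 0) :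
    ‖resolventStep z c w - resolventStep z c w'‖ ≤ c ^ 2 / z.im ^ 2 * ‖w - w'‖ := by
  have hdiff : resolventStep z c w - resolventStep z c w' =
      (c : ℂ) ^ 2 * (w - w') * (resolventStep z c w * resolventStep z c w') := by
    simp only [resolventStep]
    field_simp [sub_sq_mul_ne_zero hz c hw, sub_sq_mul_ne_zero hz c hw']
    ring
  have hbound : ‖resolventStep z c w * resolventStep z c w'‖ ≤ 1 / z.im * (1 / z.im) := by
    rw [norm_mul]
    exact mul_le_mul (resolventStep_mem hz c hw).2 (resolventStep_mem hz c hw').2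
      (norm_nonneg _) (by positivity)
  calc ‖resolventStep z c w - resolventStep z c w'‖
      ≤ c ^ 2 * ‖w - w'‖ * (1 / z.im * (1 / z.im)) := by
        rw [hdiff, norm_mul, norm_mul, norm_pow, Complex.norm_real, Real.norm_eq_abs, sq_abs]
        gcongr
    _ = c ^ 2 / z.im ^ 2 * ‖w - w'‖ := by ring

lemma continuousAt_resolventStep (c : ℝ) {w : ℂ} (hw : w.im ≤ 0) :
    ContinuousAt (resolventStep z c) w :=
  (continuousAt_const.sub (continuousAt_const.mul continuousAt_id)).inv₀
    (sub_sq_mul_ne_zero hz c hw)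

end Step

noncomputable def backIter (z : ℂ) : ℕ → (ℕ → ℝ) → ℂ
  | 0, _ => 1 / z
  | n + 1, x => resolventStep z (x 0) (backIter z n fun i ↦ x (i + 1))

lemma backIter_congr (z : ℂ) {n : ℕ} {x y : ℕ → ℝ} (h : ∀ i < n, x i = y i) :
    backIter z n x = backIter z n y := by
  induction n generalizing x y with
  | zero => rfl
  | succ n ih =>
    simp only [backIter, h 0 n.succ_pos, ih fun i hi ↦ h (i + 1) (by omega)]

@[fun_prop]
lemma measurable_backIter (z : ℂ) (n : ℕ) : Measurable (backIter z n) := by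
  induction n with
  | zero => exact measurable_const
  | succ n ih =>
    simp only [backIter, resolventStep]
    fun_prop

lemma backIter_mem {z : ℂ} (hz : 0 < z.im) (n : ℕ) (x : ℕ → ℝ) :
    backIter z n x ∈ lowerHalfDisk (1 / z.im) := by
  cases n with
  | zero => exact one_div_mem_lowerHalfDisk hz
  | succ n => exact resolventStep_mem hz _ (backIter_mem hz n _).1

lemma norm_backIter_succ_sub_le {z : ℂ} (hz : 0 < z.im) (n : ℕ) (x : ℕ → ℝ) :
    ‖backIter z (n + 1) x - backIter z n x‖ ≤
      2 / z.im * ∏ i ∈ Finset.range n, x i ^ 2 / z.im ^ 2 := by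
  induction n generalizing x with
  | zero =>
    simpa [div_eq_mul_inv] using
      norm_sub_le_of_mem_lowerHalfDisk (backIter_mem hz 1 x) (backIter_mem hz 0 x)
  | succ n ih =>
    calc ‖backIter z (n + 2) x - backIter z (n + 1) x‖
        ≤ x 0 ^ 2 / z.im ^ 2 *
            ‖backIter z (n + 1) (fun i ↦ x (i + 1)) - backIter z n (fun i ↦ x (i + 1))‖ :=
          norm_resolventStep_sub_le hz _ (backIter_mem hz _ _).1 (backIter_mem hz _ _).1
      _ ≤ x 0 ^ 2 / z.im ^ 2 *
            (2 / z.im * ∏ i ∈ Finset.range n, x (i + 1) ^ 2 / z.im ^ 2) := by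
          gcongr; exact ih _
      _ = 2 / z.im * ∏ i ∈ Finset.range (n + 1), x i ^ 2 / z.im ^ 2 := by
          rw [Finset.prod_range_succ']; ring

noncomputable def backLimit (z : ℂ) (x : ℕ → ℝ) : ℂ :=
  limUnder atTop fun n ↦ backIter z n x

@[fun_prop]
lemma measurable_backLimit (z : ℂ) : Measurable (backLimit z) :=
  (StronglyMeasurable.limUnder fun n ↦ (measurable_backIter z n).stronglyMeasurable).measurable

lemma tendsto_backIter_of_tendsto_shift {z : ℂ} (hz : 0 < z.im) {x : ℕ → ℝ} {w : ℂ}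
    (h : Tendsto (fun n ↦ backIter z n fun i ↦ x (i + 1)) atTop (𝓝 w)) :
    Tendsto (fun n ↦ backIter z n x) atTop (𝓝 (resolventStep z (x 0) w)) := by
  have hw : w.im ≤ 0 :=
    ((isClosed_lowerHalfDisk _).mem_of_tendsto h (Eventually.of_forall (backIter_mem hz · _))).1
  exact (tendsto_add_atTop_iff_nat 1).1 ((continuousAt_resolventStep hz _ hw).tendsto.comp h)

lemma backLimit_eq_resolventStep {z : ℂ} (hz : 0 < z.im) {x : ℕ → ℝ}
    (h : Tendsto (fun n ↦ backIter z n fun i ↦ x (i + 1)) atTop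
      (𝓝 (backLimit z fun i ↦ x (i + 1)))) :
    backLimit z x = resolventStep z (x 0) (backLimit z fun i ↦ x (i + 1)) :=
  (tendsto_backIter_of_tendsto_shift hz h).limUnder_eq

section IIDSequence

variable {μ : Measure ℝ} [IsProbabilityMeasure μ]

lemma lintegral_prod_range_infinitePi {f : ℝ → ℝ≥0∞} (hf : Measurable f) (n : ℕ) :
    ∫⁻ x, ∏ i ∈ Finset.range n, f (x i) ∂infinitePi (fun _ ↦ μ) = (∫⁻ c, f c ∂μ) ^ n := by
  rw [lintegral_prod_eq_prod_lintegral_of_indepFun _ _ (iIndepFun_infinitePi fun _ ↦ hf)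
    fun i ↦ hf.comp (measurable_pi_apply i)]
  have hcoord (i : ℕ) : ∫⁻ x, f (x i) ∂infinitePi (fun _ ↦ μ) = ∫⁻ c, f c ∂μ := by
    rw [← lintegral_map hf (measurable_pi_apply i), infinitePi_map_eval]
  simp [hcoord]

lemma measurePreserving_shift :
    MeasurePreserving (fun (x : ℕ → ℝ) i ↦ x (i + 1)) (infinitePi fun _ ↦ μ)
      (infinitePi fun _ ↦ μ) :=
  ⟨by fun_prop, map_infinitePi_infinitePi_of_inj (add_left_injective 1)⟩

lemma indepFun_eval_zero_shift :
    IndepFun (fun (x : ℕ → ℝ) ↦ x 0) (fun x i ↦ x (i + 1)) (infinitePi fun _ ↦ μ) :=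
  (iIndepFun_infinitePi (X := fun _ ↦ id) fun _ ↦ measurable_id).indepFun_zero_tail
    measurable_pi_apply

lemma integral_comp_shift {E : Type*} [NormedAddCommGroup E] [NormedSpace ℝ E]
    {g : (ℕ → ℝ) → E} (hg : AEStronglyMeasurable g (infinitePi fun _ ↦ μ)) :
    ∫ x, g (fun i ↦ x (i + 1)) ∂infinitePi (fun _ ↦ μ) = ∫ x, g x ∂infinitePi (fun _ ↦ μ) := by
  have h := measurePreserving_shift (μ := μ)
  have := integral_map (f := g) h.measurable.aemeasurable (by rwa [h.map_eq])
  rwa [h.map_eq, eq_comm] at this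

lemma integrable_backIter {z : ℂ} (hz : 0 < z.im) (n : ℕ) :
    Integrable (backIter z n) (infinitePi fun _ ↦ μ) :=
  .of_bound (by fun_prop) _ (ae_of_all _ fun x ↦ (backIter_mem hz n x).2)

section Convergence

variable {z : ℂ} (hz : 0 < z.im) (hμ : Integrable (fun c ↦ c ^ 2) μ)
  (hq : (∫ c, c ^ 2 ∂μ) / z.im ^ 2 < 1)
include hz hμ hq

lemma ae_tendsto_backLimit :
    ∀ᵐ x ∂infinitePi (fun _ ↦ μ), Tendsto (backIter z · x) atTop (𝓝 (backLimit z x)) := by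
  have hd (n : ℕ) (x : ℕ → ℝ) : edist (backIter z n x) (backIter z (n + 1) x) ≤
      ENNReal.ofReal (2 / z.im) * ∏ i ∈ Finset.range n, ENNReal.ofReal (x i ^ 2 / z.im ^ 2) := by
    rw [edist_comm, edist_dist, dist_eq_norm,
      ← ENNReal.ofReal_prod_of_nonneg (fun _ _ ↦ by positivity),
      ← ENNReal.ofReal_mul (by positivity)]
    exact ENNReal.ofReal_le_ofReal (norm_backIter_succ_sub_le hz n x)
  have hfactor : ∫⁻ c, ENNReal.ofReal (c ^ 2 / z.im ^ 2) ∂μ =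
      ENNReal.ofReal ((∫ c, c ^ 2 ∂μ) / z.im ^ 2) := by
    rw [← integral_div, ofReal_integral_eq_lintegral_ofReal (hμ.div_const _)
      (ae_of_all _ fun _ ↦ by positivity)]
  have hmeas (n : ℕ) : Measurable fun x : ℕ → ℝ ↦
      ∏ i ∈ Finset.range n, ENNReal.ofReal (x i ^ 2 / z.im ^ 2) :=
    Finset.measurable_prod _ fun i _ ↦ by fun_prop
  have hsum : ∑' n, ∫⁻ x, ENNReal.ofReal (2 / z.im) *
      ∏ i ∈ Finset.range n, ENNReal.ofReal (x i ^ 2 / z.im ^ 2) ∂infinitePi (fun _ ↦ μ) ≠ ∞ := by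
    simp_rw [lintegral_const_mul _ (hmeas _),
      lintegral_prod_range_infinitePi (f := fun c ↦ ENNReal.ofReal (c ^ 2 / z.im ^ 2))
        (by fun_prop),
      hfactor, ENNReal.tsum_mul_left, ENNReal.tsum_geometric]
    exact ENNReal.mul_ne_top ENNReal.ofReal_ne_top
      (ENNReal.inv_ne_top.2 (tsub_pos_of_lt (ENNReal.ofReal_lt_one.2 hq)).ne')
  filter_upwards [ae_cauchySeq_of_tsum_lintegral_ne_top
    (fun n ↦ ((hmeas n).const_mul _).aemeasurable) hd hsum] with x hx
  exact tendsto_nhds_limUnder (cauchySeq_tendsto_of_complete hx)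

lemma ae_backLimit_mem :
    ∀ᵐ x ∂infinitePi (fun _ ↦ μ), backLimit z x ∈ lowerHalfDisk (1 / z.im) := by
  filter_upwards [ae_tendsto_backLimit hz hμ hq] with x hx
  exact (isClosed_lowerHalfDisk _).mem_of_tendsto hx (Eventually.of_forall (backIter_mem hz · x))

lemma integrable_backLimit : Integrable (backLimit z) (infinitePi fun _ ↦ μ) :=
  .of_bound (by fun_prop) _ ((ae_backLimit_mem hz hμ hq).mono fun _ hx ↦ hx.2)

lemma tendsto_integral_norm_backIter_sub_backLimit :
    Tendsto (fun n ↦ ∫ x, ‖backIter z n x - backLimit z x‖ ∂infinitePi (fun _ ↦ μ)) atTop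
      (𝓝 0) := by
  rw [← integral_zero (ℕ → ℝ) ℝ]
  refine tendsto_integral_of_dominated_convergence (fun _ ↦ 2 * (1 / z.im))
    (fun n ↦ by fun_prop) (integrable_const _) (fun n ↦ ?_) ?_
  · filter_upwards [ae_backLimit_mem hz hμ hq] with x hx
    rw [norm_norm]
    exact norm_sub_le_of_mem_lowerHalfDisk (backIter_mem hz n x) hx
  · filter_upwards [ae_tendsto_backLimit hz hμ hq] with x hx
    exact tendsto_iff_norm_sub_tendsto_zero.1 hx

lemma cauchy_W1_map_backIter :
    ∀ ε > (0 : ℝ), ∃ N, ∀ m, N ≤ m → ∀ n, N ≤ n →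
      W1 ((infinitePi fun _ ↦ μ).map (backIter z m))
        ((infinitePi fun _ ↦ μ).map (backIter z n)) < ε := by
  intro ε hε
  obtain ⟨N, hN⟩ := eventually_atTop.1 <|
    (tendsto_order.1 (tendsto_integral_norm_backIter_sub_backLimit hz hμ hq)).2 (ε / 2)
      (by positivity)
  have hint (n : ℕ) :
      Integrable (fun x ↦ ‖backIter z n x - backLimit z x‖) (infinitePi fun _ ↦ μ) :=
    ((integrable_backIter hz n).sub (integrable_backLimit hz hμ hq)).norm
  refine ⟨N, fun m hm n hn ↦ ?_⟩
  calc W1 ((infinitePi fun _ ↦ μ).map (backIter z m)) ((infinitePi fun _ ↦ μ).map (backIter z n))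
      ≤ ∫ x, ‖backIter z m x - backIter z n x‖ ∂infinitePi (fun _ ↦ μ) :=
        W1_map_le_integral_norm_sub (integrable_backIter hz m) (integrable_backIter hz n)
    _ ≤ ∫ x, ‖backIter z m x - backLimit z x‖ + ‖backIter z n x - backLimit z x‖
          ∂infinitePi (fun _ ↦ μ) := by
        refine integral_mono ((integrable_backIter hz m).sub (integrable_backIter hz n)).norm
          ((hint m).add (hint n)) fun x ↦ ?_
        simpa only [norm_sub_rev (backIter z n x)] using norm_sub_le_norm_sub_add_norm_sub _ _ _
    _ < ε / 2 + ε / 2 := by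
        rw [integral_add (hint m) (hint n)]
        exact add_lt_add (hN m hm) (hN n hn)
    _ = ε := add_halves ε

lemma tendsto_integral_comp_backIter {f : ℂ → ℝ} (hf : Continuous f) {C : ℝ}
    (hC : ∀ w, |f w| ≤ C) :
    Tendsto (fun n ↦ ∫ x, f (backIter z n x) ∂infinitePi (fun _ ↦ μ)) atTop
      (𝓝 (∫ x, f (backLimit z x) ∂infinitePi (fun _ ↦ μ))) := by
  refine tendsto_integral_of_dominated_convergence (fun _ ↦ C)
    (fun n ↦ (hf.measurable.comp (measurable_backIter z n)).aestronglyMeasurable)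
    (integrable_const _) (fun n ↦ ae_of_all _ fun x ↦ hC _) ?_
  filter_upwards [ae_tendsto_backLimit hz hμ hq] with x hx
  exact (hf.tendsto _).comp hx

lemma map_resolventStep_backLimit_shift :
    (infinitePi fun _ ↦ μ).map (fun x ↦ resolventStep z (x 0) (backLimit z fun i ↦ x (i + 1))) =
      (infinitePi fun _ ↦ μ).map (fun x ↦ backLimit z fun i ↦ x (i + 1)) := by
  have hfix : backLimit z =ᵐ[infinitePi fun _ ↦ μ]
      fun x ↦ resolventStep z (x 0) (backLimit z fun i ↦ x (i + 1)) := by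
    filter_upwards [measurePreserving_shift.quasiMeasurePreserving.ae
      (ae_tendsto_backLimit hz hμ hq)] with x hx
    exact backLimit_eq_resolventStep hz hx
  rw [← Measure.map_congr hfix]
  conv_lhs => rw [← (measurePreserving_shift (μ := μ)).map_eq]
  exact map_map (measurable_backLimit z) (measurePreserving_shift (μ := μ)).measurable

end Convergence

end IIDSequence

section Recursion

variable {Ω : Type*} {z : ℂ} {b : ℕ → Ω → ℝ} {s : ℕ → Ω → ℂ} (hs1 : s 1 = fun _ ↦ 1 / z)
  (hsrec : ∀ i, 1 ≤ i → s (i + 1) = fun ω ↦ (z - (b i ω : ℂ) ^ 2 * s i ω)⁻¹)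
include hs1 hsrec

lemma eq_backIter_of_recursion (n : ℕ) (ω : Ω) :
    s (n + 1) ω = backIter z n fun i ↦ b (n - i) ω := by
  induction n with
  | zero => rw [hs1]; rfl
  | succ n ih => simp [hsrec (n + 1) n.succ_pos, ih, backIter, resolventStep]

variable {mΩ : MeasurableSpace Ω} (hmeas : ∀ i, Measurable (b i))
include hmeas

lemma measurable_of_recursion (n : ℕ) : Measurable (s (n + 1)) := by
  rw [funext (eq_backIter_of_recursion hs1 hsrec n)]
  fun_prop

lemma map_succ_eq_map_backIter {P : Measure Ω} {ν : Measure ℝ} (hindep : iIndepFun b P)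
    (hlaw : ∀ i, P.map (b i) = ν) (n : ℕ) :
    P.map (s (n + 1)) = (infinitePi fun _ ↦ ν).map (backIter z n) := by
  -- `backIter z n` reads only the first `n` coordinates, so the reversed indices `n - i`
  -- can be completed to an injection `ℕ → ℕ`
  have hσ : (fun i ↦ if i < n then n - i else i + 1).Injective := by
    intro i j h
    simp only at h
    split_ifs at h <;> omega
  have hs : s (n + 1) = backIter z n ∘ fun ω i ↦ b (if i < n then n - i else i + 1) ω :=
    funext fun ω ↦ (eq_backIter_of_recursion hs1 hsrec n ω).trans
      (backIter_congr z fun i hi ↦ by simp [hi])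
  rw [hs, ← map_map (measurable_backIter z n) (by fun_prop),
    hindep.map_comp_eq_infinitePi hmeas hlaw hσ]

end Recursion

end TridiagResolvent

open TridiagResolvent

theorem tridiag_corner_resolvent_converges
    {Ω : Type*} [MeasureSpace Ω] [IsProbabilityMeasure (ℙ : Measure Ω)]
    (b : ℕ → Ω → ℝ) (hmeas : ∀ i, Measurable (b i))
    (hindep : iIndepFun b ℙ)
    (hident : ∀ i j, Measure.map (b i) ℙ = Measure.map (b j) ℙ)
    (hL2 : Integrable (fun ω => (b 1 ω) ^ 2) ℙ)
    (z : ℂ) (hz : (∫ ω, (b 1 ω) ^ 2 ∂ℙ) < z.im)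
    (hz' : (∫ ω, (b 1 ω) ^ 2 ∂ℙ) / z.im ^ 2 < 1)
    (s : ℕ → Ω → ℂ) (hs1 : s 1 = fun _ => 1 / z)
    (hsrec : ∀ i, 1 ≤ i → s (i + 1) = fun ω => (z - ((b i ω : ℂ)) ^ 2 * s i ω)⁻¹) :
    -- the laws of the `s i` form a Cauchy sequence for the Wasserstein-1 distance
    (∀ ε > (0 : ℝ), ∃ N, ∀ m, N ≤ m → ∀ n, N ≤ n →
        W1 (Measure.map (s m) ℙ) (Measure.map (s n) ℙ) < ε) ∧
    -- and converge in distribution to a fixed point of the distributional equation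
    ∃ (Ω' : Type) (_ : MeasureSpace Ω') (_ : IsProbabilityMeasure (ℙ : Measure Ω'))
      (S : Ω' → ℂ) (b' : Ω' → ℝ),
        Measurable S ∧ Measurable b' ∧
        Measure.map b' ℙ = Measure.map (b 1) ℙ ∧
        IndepFun b' S ℙ ∧
        (∀ᵐ ω' ∂(ℙ : Measure Ω'), (S ω').im ≤ 0 ∧ ‖S ω'‖ ≤ 1 / z.im) ∧
        Measure.map (fun ω' => (z - ((b' ω' : ℂ)) ^ 2 * S ω')⁻¹) ℙ = Measure.map S ℙ ∧
        ∀ f : ℂ → ℝ, Continuous f → (∃ C, ∀ x, |f x| ≤ C) →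
          Tendsto (fun n => ∫ ω, f (s n ω) ∂ℙ) atTop (nhds (∫ ω', f (S ω') ∂ℙ)) := by
  have hv : 0 < z.im := (integral_nonneg fun _ ↦ sq_nonneg _).trans_lt hz
  set μ := Measure.map (b 1) ℙ
  set P := infinitePi fun _ : ℕ ↦ μ
  have : IsProbabilityMeasure μ := isProbabilityMeasure_map (hmeas 1).aemeasurable
  have hμ : Integrable (fun c ↦ c ^ 2) μ :=
    (integrable_map_measure (by fun_prop) (hmeas 1).aemeasurable).2 hL2
  have hq : (∫ c, c ^ 2 ∂μ) / z.im ^ 2 < 1 := by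
    rwa [integral_map (hmeas 1).aemeasurable (by fun_prop)]
  have hlaw := map_succ_eq_map_backIter hs1 hsrec hmeas hindep (hident · 1)
  refine ⟨fun ε hε ↦ ?_, ℕ → ℝ, ⟨P⟩, inferInstanceAs (IsProbabilityMeasure P),
    fun x ↦ backLimit z fun i ↦ x (i + 1), fun x ↦ x 0, by fun_prop, by fun_prop,
    infinitePi_map_eval _ 0, indepFun_eval_zero_shift.comp measurable_id (measurable_backLimit z),
    measurePreserving_shift.quasiMeasurePreserving.ae (ae_backLimit_mem hv hμ hq),
    map_resolventStep_backLimit_shift hv hμ hq, fun f hf ⟨C, hC⟩ ↦ ?_⟩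
  · obtain ⟨N, hN⟩ := cauchy_W1_map_backIter hv hμ hq ε hε
    refine ⟨N + 1, fun m hm n hn ↦ ?_⟩
    obtain ⟨m, rfl⟩ : ∃ k, m = k + 1 := ⟨m - 1, by omega⟩
    obtain ⟨n, rfl⟩ : ∃ k, n = k + 1 := ⟨n - 1, by omega⟩
    rw [hlaw, hlaw]
    exact hN m (by omega) n (by omega)
  · have hcomp (n : ℕ) : ∫ ω, f (s (n + 1) ω) = ∫ x, f (backIter z n x) ∂P := by
      rw [← integral_map (measurable_of_recursion hs1 hsrec hmeas n).aemeasurable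
        hf.aestronglyMeasurable, hlaw, integral_map (by fun_prop) hf.aestronglyMeasurable]
    rw [← tendsto_add_atTop_iff_nat 1]
    simp_rw [hcomp]
    rw [integral_comp_shift (g := fun w ↦ f (backLimit z w)) (by fun_prop)]
    exact tendsto_integral_comp_backIter hv hμ hq hf hC
end

section
/- (Hoffman–Wielandt) Let A and B be N×N Hermitian matrices with eigenvalues λ_1^A ≤ … ≤ λ_N^A and λ_1^B ≤ … ≤ λ_N^B listed in increasing order with multiplicity. Then Σ_{i=1}^N |λ_i^A − λ_i^B|² ≤ ‖A − B‖_F², where ‖·‖_F is the Frobenius (Hilbert–Schmidt) norm. -/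
/-!
Diagonalise `A = U diag(α) U*` and `B = V diag(β) V*`. With the unitary `W = U* V`,
`‖A - B‖_F² = ∑ i j, |W i j|² (α i - β j)²`, and `S i j = |W i j|²` is doubly stochastic.
Expanding the square reduces the claim to `∑ i j, S i j α i β j ≤ ∑ i, α↑ i β↑ i` for the sorted
eigenvalues. The left side is linear in `S`, so by Birkhoff's theorem it suffices to check it
at permutation matrices, where it is the rearrangement inequality.
-/

open Matrix Equiv

section DoublyStochastic

variable {ι R : Type*} [Fintype ι]

theorem Monovary.comp_perm_dotProduct_comp_perm_le [Semiring R] [LinearOrder R]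
    [IsStrictOrderedRing R] [ExistsAddOfLE R] {f g : ι → R} (hfg : Monovary f g)
    (σ τ : Perm ι) : (f ∘ σ) ⬝ᵥ (g ∘ τ) ≤ f ⬝ᵥ g := by
  calc (f ∘ σ) ⬝ᵥ (g ∘ τ) = ∑ i, f i * g ((σ.symm.trans τ) i) := by
        simpa [dotProduct] using Equiv.sum_comp σ fun j => f j * g (τ (σ.symm j))
    _ ≤ f ⬝ᵥ g := hfg.sum_mul_comp_perm_le_sum_mul

variable [Field R] [LinearOrder R] [IsStrictOrderedRing R] [DecidableEq ι]

theorem Monovary.comp_perm_dotProduct_mulVec_le {f g : ι → R} (hfg : Monovary f g)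
    (σ τ : Perm ι) {S : Matrix ι ι R} (hS : S ∈ doublyStochastic R ι) :
    (f ∘ σ) ⬝ᵥ (S *ᵥ (g ∘ τ)) ≤ f ⬝ᵥ g := by
  have hlin : IsLinearMap R fun M : Matrix ι ι R => (f ∘ σ) ⬝ᵥ (M *ᵥ (g ∘ τ)) :=
    ⟨fun M N => by simp [add_mulVec, dotProduct_add],
      fun c M => by simp [smul_mulVec, dotProduct_smul]⟩
  rw [← SetLike.mem_coe, doublyStochastic_eq_convexHull_permMatrix] at hS
  refine convexHull_min ?_ (convex_halfSpace_le hlin _) hS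
  rintro _ ⟨ρ, rfl⟩
  simpa [permMatrix_mulVec, Function.comp_assoc] using
    hfg.comp_perm_dotProduct_comp_perm_le σ (ρ.trans τ)

theorem sum_sum_mul_sub_sq_of_mem_doublyStochastic {S : Matrix ι ι R}
    (hS : S ∈ doublyStochastic R ι) (x y : ι → R) :
    ∑ i, ∑ j, S i j * (x i - y j) ^ 2 = ∑ i, x i ^ 2 + ∑ j, y j ^ 2 - 2 * (x ⬝ᵥ (S *ᵥ y)) := by
  calc ∑ i, ∑ j, S i j * (x i - y j) ^ 2
      = ∑ i, ∑ j, S i j * x i ^ 2 + ∑ i, ∑ j, S i j * y j ^ 2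
          - 2 * ∑ i, x i * ∑ j, S i j * y j := by
        simp only [← Finset.sum_add_distrib, ← Finset.sum_sub_distrib, Finset.mul_sum]
        exact Finset.sum_congr rfl fun i _ => Finset.sum_congr rfl fun j _ => by ring
    _ = _ := by
        rw [Finset.sum_comm (f := fun i j => S i j * y j ^ 2)]
        simp only [← Finset.sum_mul, sum_row_of_mem_doublyStochastic hS,
          sum_col_of_mem_doublyStochastic hS, one_mul, dotProduct, mulVec]

theorem Monovary.sum_sub_sq_le_sum_sum_mul_sub_sq {f g : ι → R} (hfg : Monovary f g)
    (σ τ : Perm ι) {S : Matrix ι ι R} (hS : S ∈ doublyStochastic R ι) :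
    ∑ i, (f i - g i) ^ 2 ≤ ∑ i, ∑ j, S i j * (f (σ i) - g (τ j)) ^ 2 := by
  have key := hfg.comp_perm_dotProduct_mulVec_le σ τ hS
  have hexp := sum_sum_mul_sub_sq_of_mem_doublyStochastic hS (f ∘ σ) (g ∘ τ)
  have hf := Equiv.sum_comp σ fun i => f i ^ 2
  have hg := Equiv.sum_comp τ fun i => g i ^ 2
  simp only [Function.comp_apply] at hexp
  have hsq : ∑ i, (f i - g i) ^ 2 = ∑ i, f i ^ 2 + ∑ i, g i ^ 2 - 2 * f ⬝ᵥ g := by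
    simp only [sub_sq, Finset.sum_add_distrib, Finset.sum_sub_distrib, Finset.mul_sum,
      dotProduct, mul_assoc]
    ring
  linarith

end DoublyStochastic

namespace Matrix

variable {𝕜 m n : Type*} [RCLike 𝕜]

theorem conjTranspose_mul_self_apply_self [Fintype m] (M : Matrix m n 𝕜) (j : n) :
    (Mᴴ * M) j j = ((∑ i, ‖M i j‖ ^ 2 : ℝ) : 𝕜) := by
  simp only [mul_apply, conjTranspose_apply, RCLike.star_def, RCLike.conj_mul]
  push_cast; rfl

theorem mul_conjTranspose_self_apply_self [Fintype n] (M : Matrix m n 𝕜) (i : m) :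
    (M * Mᴴ) i i = ((∑ j, ‖M i j‖ ^ 2 : ℝ) : 𝕜) := by
  simpa using conjTranspose_mul_self_apply_self Mᴴ i

theorem sum_sum_norm_sq_eq_re_trace [Fintype m] [Fintype n] (M : Matrix m n 𝕜) :
    ∑ i, ∑ j, ‖M i j‖ ^ 2 = RCLike.re (Mᴴ * M).trace := by
  simp only [trace, diag_apply, conjTranspose_mul_self_apply_self, map_sum, RCLike.ofReal_re]
  exact Finset.sum_comm

theorem sum_sum_norm_sq_unitary_mul_mul_unitary [Fintype m] [Fintype n] [DecidableEq m]
    [DecidableEq n] {U : Matrix m m 𝕜} {V : Matrix n n 𝕜} (hU : U ∈ unitaryGroup m 𝕜)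
    (hV : V ∈ unitaryGroup n 𝕜) (M : Matrix m n 𝕜) :
    ∑ i, ∑ j, ‖(U * M * V) i j‖ ^ 2 = ∑ i, ∑ j, ‖M i j‖ ^ 2 := by
  rw [sum_sum_norm_sq_eq_re_trace, sum_sum_norm_sq_eq_re_trace]
  have hU' : Uᴴ * U = 1 := Unitary.star_mul_self_of_mem hU
  have hV' : V * Vᴴ = 1 := Unitary.mul_star_self_of_mem hV
  simp only [conjTranspose_mul, Matrix.mul_assoc]
  rw [← Matrix.mul_assoc Uᴴ U, hU', Matrix.one_mul, trace_mul_comm, Matrix.mul_assoc,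
    Matrix.mul_assoc, hV', Matrix.mul_one]

theorem norm_sq_entries_mem_doublyStochastic [Fintype n] [DecidableEq n] {W : Matrix n n 𝕜}
    (hW : W ∈ unitaryGroup n 𝕜) : (fun i j => ‖W i j‖ ^ 2) ∈ doublyStochastic ℝ n := by
  refine mem_doublyStochastic_iff_sum.2 ⟨fun _ _ => sq_nonneg _, fun i => ?_, fun j => ?_⟩
  · have := congr_fun₂ (show W * Wᴴ = 1 from Unitary.mul_star_self_of_mem hW) i i
    rw [mul_conjTranspose_self_apply_self, one_apply_eq] at this
    exact_mod_cast this
  · have := congr_fun₂ (show Wᴴ * W = 1 from Unitary.star_mul_self_of_mem hW) j j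
    rw [conjTranspose_mul_self_apply_self, one_apply_eq] at this
    exact_mod_cast this

theorem sum_sum_norm_sq_sub_eq_of_eq_unitary_conj_diagonal [Fintype n] [DecidableEq n]
    {U V A B : Matrix n n 𝕜} (hU : U ∈ unitaryGroup n 𝕜) (hV : V ∈ unitaryGroup n 𝕜)
    {α β : n → ℝ} (hA : A = U * diagonal (RCLike.ofReal ∘ α) * star U)
    (hB : B = V * diagonal (RCLike.ofReal ∘ β) * star V) :
    ∑ i, ∑ j, ‖(A - B) i j‖ ^ 2 = ∑ i, ∑ j, ‖(star U * V) i j‖ ^ 2 * (α i - β j) ^ 2 := by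
  have hconj : star U * (A - B) * V =
      diagonal (RCLike.ofReal ∘ α) * (star U * V) - star U * V * diagonal (RCLike.ofReal ∘ β) := by
    subst hA hB
    simp only [Matrix.mul_sub, Matrix.sub_mul, ← Matrix.mul_assoc,
      Unitary.star_mul_self_of_mem hU, Matrix.one_mul]
    simp only [Matrix.mul_assoc, Unitary.star_mul_self_of_mem hV, Matrix.mul_one]
  rw [← sum_sum_norm_sq_unitary_mul_mul_unitary (Unitary.star_mem hU) hV, hconj]
  refine Finset.sum_congr rfl fun i _ => Finset.sum_congr rfl fun j _ => ?_
  have hentry : (α i : 𝕜) * (star U * V) i j - (star U * V) i j * β j =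
      ((α i - β j : ℝ) : 𝕜) * (star U * V) i j := by
    push_cast; ring
  rw [sub_apply, diagonal_mul, mul_diagonal, Function.comp_apply, Function.comp_apply, hentry,
    norm_mul, RCLike.norm_ofReal, mul_pow, sq_abs, mul_comm]

end Matrix

/-- Hoffman–Wielandt inequality for Hermitian matrices. -/
theorem hoffman_wielandt {N : ℕ} (A B : Matrix (Fin N) (Fin N) ℂ)
    (hA : A.IsHermitian) (hB : B.IsHermitian)
    (lamA lamB : Fin N → ℝ) (hAmono : Monotone lamA) (hBmono : Monotone lamB)
    (hAperm : ∃ σ : Equiv.Perm (Fin N), lamA = hA.eigenvalues ∘ σ)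
    (hBperm : ∃ σ : Equiv.Perm (Fin N), lamB = hB.eigenvalues ∘ σ) :
    (∑ i, |lamA i - lamB i| ^ 2) ≤ ∑ i, ∑ j, ‖(A - B) i j‖ ^ 2 := by
  obtain ⟨σ, rfl⟩ := hAperm
  obtain ⟨τ, rfl⟩ := hBperm
  have hU := hA.eigenvectorUnitary.2
  have hV := hB.eigenvectorUnitary.2
  have hS := norm_sq_entries_mem_doublyStochastic (mul_mem (Unitary.star_mem hU) hV)
  calc ∑ i, |(hA.eigenvalues ∘ σ) i - (hB.eigenvalues ∘ τ) i| ^ 2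
      = ∑ i, ((hA.eigenvalues ∘ σ) i - (hB.eigenvalues ∘ τ) i) ^ 2 := by simp only [sq_abs]
    _ ≤ _ := (hAmono.monovary hBmono).sum_sub_sq_le_sum_sum_mul_sub_sq σ.symm τ.symm hS
    _ = ∑ i, ∑ j, ‖(A - B) i j‖ ^ 2 := by
      rw [sum_sum_norm_sq_sub_eq_of_eq_unitary_conj_diagonal hU hV hA.spectral_theorem
        hB.spectral_theorem]
      simp
end

section
/- Let T be a real random variable with law μ_T and cumulative distribution function F_T. Then there exists a triangular array (σ_{k,N})_{1≤k≤N, N≥2} of real numbers such that: (1) max_{2≤k≤N} |σ_{k,N} − σ_{k−1,N}| → 0 as N → ∞; and (2) the empirical measures ν_N = (1/(N−1))·Σ_{k=1}^{N−1} δ_{σ_{k,N}} converge weakly to μ_T. -/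
/-!
Round `μ` up to the grid `-j + i / j` (`0 ≤ i ≤ 2 j²`) of mesh `1 / j`, clamping into `[-j, j]`;
by dominated convergence the rounded laws converge weakly to `μ` as `j → ∞`. Mixing the grid
weights with a `1 / j` share of the uniform weights makes every weight at least
`1 / (j (2 j² + 1))`. With `n ≥ j (2 j² + 1)` ordered samples, grid point `i` taking
`⌊n W_{i+1}⌋ - ⌊n W_i⌋` of them (`W` the cumulative weights), every grid point receives a sample,
so consecutive samples lie on equal or adjacent grid points (mesh `≤ 1 / j`), while the empirical
mean of `f` is within `3 ‖f‖ / j` of its rounded integral. Letting `j` grow slowly with `N` gives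
both properties.
-/

open MeasureTheory Filter Finset Topology

namespace SlowlyVaryingArray

noncomputable section

section Sampling

variable (v : ℕ → ℝ) (n : ℕ)

def cumCount (i : ℕ) : ℕ := ⌊(n : ℝ) * ∑ l ∈ range i, v l⌋₊

/-- Grid index of the `k`-th of `n` ordered samples: index `i` receives the samples `k` with
`cumCount v n i < k ≤ cumCount v n (i + 1)`. -/
def sampleIndex (k : ℕ) : ℕ := sInf {i | k ≤ cumCount v n (i + 1)}

variable {v n}

lemma cumCount_mono (hv : ∀ i, 0 ≤ v i) : Monotone (cumCount v n) := fun _ _ hab =>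
  Nat.floor_mono <| mul_le_mul_of_nonneg_left
    (sum_le_sum_of_subset_of_nonneg (range_subset_range.2 hab) fun l _ _ => hv l) n.cast_nonneg

lemma cumCount_of_sum_eq_one {M : ℕ} (hM : ∑ i ∈ range M, v i = 1) : cumCount v n M = n := by
  simp [cumCount, hM]

lemma cumCount_add_one_le (hv : ∀ i, 0 ≤ v i) {i : ℕ} (hvi : 1 ≤ n * v i) :
    cumCount v n i + 1 ≤ cumCount v n (i + 1) := by
  have hpos : 0 ≤ (n : ℝ) * ∑ l ∈ range i, v l :=
    mul_nonneg n.cast_nonneg (sum_nonneg fun l _ => hv l)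
  rw [cumCount, ← Nat.floor_add_one hpos, cumCount, sum_range_succ, mul_add]
  exact Nat.floor_mono (by linarith)

lemma abs_cumCount_sub_sub_le (hv : ∀ i, 0 ≤ v i) (i : ℕ) :
    |((cumCount v n (i + 1) : ℝ) - cumCount v n i) - n * v i| ≤ 1 := by
  have hpos : ∀ r, 0 ≤ (n : ℝ) * ∑ l ∈ range r, v l := fun r =>
    mul_nonneg n.cast_nonneg (sum_nonneg fun l _ => hv l)
  have h₁ := Nat.floor_le (hpos (i + 1))
  have h₂ := Nat.lt_floor_add_one ((n : ℝ) * ∑ l ∈ range (i + 1), v l)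
  have h₃ := Nat.floor_le (hpos i)
  have h₄ := Nat.lt_floor_add_one ((n : ℝ) * ∑ l ∈ range i, v l)
  rw [sum_range_succ, mul_add] at h₁ h₂
  rw [cumCount, cumCount, sum_range_succ, mul_add, abs_le]
  constructor <;> linarith

lemma sampleIndex_eq (hv : ∀ i, 0 ≤ v i) {i k : ℕ} (h₁ : cumCount v n i < k)
    (h₂ : k ≤ cumCount v n (i + 1)) : sampleIndex v n k = i := by
  refine le_antisymm (Nat.sInf_le h₂) (not_lt.1 fun hlt => ?_)
  have hmem : k ≤ cumCount v n (sampleIndex v n k + 1) :=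
    Nat.sInf_mem (s := {i | k ≤ cumCount v n (i + 1)}) ⟨i, h₂⟩
  have : cumCount v n (sampleIndex v n k + 1) ≤ cumCount v n i := cumCount_mono hv hlt
  omega

lemma le_cumCount_sampleIndex {M : ℕ} (hM : ∑ i ∈ range M, v i = 1) {k : ℕ} (hk : k ≤ n) :
    k ≤ cumCount v n (sampleIndex v n k + 1) := by
  have hM₀ : M ≠ 0 := by rintro rfl; simp at hM
  refine Nat.sInf_mem (s := {i | k ≤ cumCount v n (i + 1)}) ⟨M - 1, ?_⟩
  rwa [Set.mem_ofPred_eq, Nat.sub_add_cancel (Nat.one_le_iff_ne_zero.2 hM₀),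
    cumCount_of_sum_eq_one hM]

lemma sampleIndex_mono {M : ℕ} (hM : ∑ i ∈ range M, v i = 1) {k k' : ℕ} (hkk' : k ≤ k')
    (hk' : k' ≤ n) : sampleIndex v n k ≤ sampleIndex v n k' :=
  Nat.sInf_le (hkk'.trans (le_cumCount_sampleIndex hM hk'))

lemma sampleIndex_succ_le (hv : ∀ i, 0 ≤ v i) {M : ℕ} (hM : ∑ i ∈ range M, v i = 1)
    (hvn : ∀ i, 1 ≤ n * v i) {k : ℕ} (hk : k ≤ n) :
    sampleIndex v n (k + 1) ≤ sampleIndex v n k + 1 :=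
  Nat.sInf_le <| (Nat.succ_le_succ (le_cumCount_sampleIndex hM hk)).trans
    (cumCount_add_one_le hv (hvn _))

lemma sum_sampleIndex (hv : ∀ i, 0 ≤ v i) (g : ℕ → ℝ) (r : ℕ) :
    ∑ k ∈ Ioc 0 (cumCount v n r), g (sampleIndex v n k)
      = ∑ i ∈ range r, ((cumCount v n (i + 1) : ℝ) - cumCount v n i) * g i := by
  induction r with
  | zero => simp [cumCount]
  | succ r ih =>
    have hr := cumCount_mono hv (n := n) r.le_succ
    rw [sum_range_succ, ← ih, ← sum_Ioc_consecutive _ (Nat.zero_le _) hr,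
      sum_congr rfl fun k hk => congrArg g (sampleIndex_eq hv (mem_Ioc.1 hk).1 (mem_Ioc.1 hk).2),
      sum_const, Nat.card_Ioc, nsmul_eq_mul, Nat.cast_sub hr]

lemma abs_sum_sampleIndex_sub_le (hv : ∀ i, 0 ≤ v i) {M : ℕ} (hM : ∑ i ∈ range M, v i = 1)
    {g : ℕ → ℝ} {B : ℝ} (hg : ∀ i, |g i| ≤ B) :
    |∑ k ∈ Icc 1 n, g (sampleIndex v n k) - n * ∑ i ∈ range M, v i * g i| ≤ M * B := by
  have hIcc : Icc 1 n = Ioc 0 (cumCount v n M) := by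
    rw [cumCount_of_sum_eq_one hM, ← Icc_add_one_left_eq_Ioc, zero_add]
  rw [hIcc, sum_sampleIndex hv, mul_sum, ← sum_sub_distrib]
  calc |∑ i ∈ range M, (((cumCount v n (i + 1) : ℝ) - cumCount v n i) * g i - n * (v i * g i))|
      ≤ ∑ i ∈ range M, |((cumCount v n (i + 1) : ℝ) - cumCount v n i) - n * v i| * |g i| := by
        refine (abs_sum_le_sum_abs _ _).trans_eq (sum_congr rfl fun i _ => ?_)
        rw [← abs_mul]
        ring_nf
    _ ≤ ∑ _i ∈ range M, 1 * B :=
        sum_le_sum fun i _ => mul_le_mul (abs_cumCount_sub_sub_le hv i) (hg i) (abs_nonneg _)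
          zero_le_one
    _ = M * B := by simp

end Sampling

section Mixing

variable (t : ℝ) (M : ℕ) (w : ℕ → ℝ)

def mixUniform (i : ℕ) : ℝ := (1 - t) * w i + t / M

variable {t M w}

lemma div_le_mixUniform (ht : t ≤ 1) {i : ℕ} (hw : 0 ≤ w i) : t / M ≤ mixUniform t M w i :=
  le_add_of_nonneg_left (mul_nonneg (sub_nonneg.2 ht) hw)

lemma sum_mixUniform (hM : M ≠ 0) (hw : ∑ i ∈ range M, w i = 1) :
    ∑ i ∈ range M, mixUniform t M w i = 1 := by
  simp only [mixUniform, sum_add_distrib, ← mul_sum, hw, sum_const, card_range, nsmul_eq_mul]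
  field_simp
  ring

lemma abs_sum_mixUniform_mul_sub_le (ht : 0 ≤ t) (hw₀ : ∀ i, 0 ≤ w i)
    (hw : ∑ i ∈ range M, w i = 1) {g : ℕ → ℝ} {B : ℝ} (hg : ∀ i, |g i| ≤ B) :
    |∑ i ∈ range M, mixUniform t M w i * g i - ∑ i ∈ range M, w i * g i| ≤ 2 * t * B := by
  have hM : M ≠ 0 := by rintro rfl; simp at hw
  have hmean : |∑ i ∈ range M, g i / M| ≤ B := by
    refine (abs_sum_le_sum_abs _ _).trans ?_
    simp only [abs_div, Nat.abs_cast]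
    calc ∑ i ∈ range M, |g i| / M ≤ ∑ _i ∈ range M, B / M := by gcongr with i; exact hg i
      _ = B := by
        rw [sum_const, card_range, nsmul_eq_mul, mul_div_cancel₀ _ (Nat.cast_ne_zero.2 hM)]
  have hweighted : |∑ i ∈ range M, w i * g i| ≤ B := by
    refine (abs_sum_le_sum_abs _ _).trans ?_
    calc ∑ i ∈ range M, |w i * g i| ≤ ∑ i ∈ range M, w i * B := by
          gcongr with i
          rw [abs_mul, abs_of_nonneg (hw₀ i)]
          exact mul_le_mul_of_nonneg_left (hg i) (hw₀ i)
      _ = B := by rw [← sum_mul, hw, one_mul]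
  have hdiff : ∑ i ∈ range M, mixUniform t M w i * g i - ∑ i ∈ range M, w i * g i
      = t * (∑ i ∈ range M, g i / M - ∑ i ∈ range M, w i * g i) := by
    simp only [mixUniform, mul_sub, mul_sum, ← sum_sub_distrib]
    exact sum_congr rfl fun i _ => by ring
  rw [hdiff, abs_mul, abs_of_nonneg ht]
  nlinarith [abs_sub (∑ i ∈ range M, g i / M) (∑ i ∈ range M, w i * g i)]

end Mixing

lemma integral_comp_eq_sum_measureReal {X : Type*} [MeasurableSpace X] (μ : Measure X)
    [IsFiniteMeasure μ] {ι : X → ℕ} (hι : Measurable ι) {M : ℕ} (hM : ∀ x, ι x < M)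
    (g : ℕ → ℝ) : ∫ x, g (ι x) ∂μ = ∑ i ∈ range M, μ.real (ι ⁻¹' {i}) * g i := by
  have hsplit : (fun x => g (ι x))
      = fun x => ∑ i ∈ range M, (ι ⁻¹' {i}).indicator (fun _ => g i) x := by
    ext x
    rw [sum_eq_single_of_mem (ι x) (mem_range.2 (hM x))]
    · simp
    · intro i _ hi
      exact Set.indicator_of_notMem (fun h => hi h.symm) _
  have hmeas : ∀ i, MeasurableSet (ι ⁻¹' {i}) := fun i => hι (measurableSet_singleton i)
  rw [hsplit, integral_finsetSum _ fun i _ => (integrable_const _).indicator (hmeas i)]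
  exact sum_congr rfl fun i _ => by rw [integral_indicator_const _ (hmeas i), smul_eq_mul]

lemma tendsto_integral_comp_of_tendsto {X : Type*} [TopologicalSpace X] [MeasurableSpace X]
    [OpensMeasurableSpace X] (μ : Measure X) [IsFiniteMeasure μ]
    (f : BoundedContinuousFunction X ℝ) {r : ℕ → X → X}
    (hr : ∀ j, Measurable (r j)) (hlim : ∀ x, Tendsto (fun j => r j x) atTop (𝓝 x)) :
    Tendsto (fun j => ∫ x, f (r j x) ∂μ) atTop (𝓝 (∫ x, f x ∂μ)) :=
  tendsto_integral_of_dominated_convergence (fun _ => ‖f‖)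
    (fun j => (f.continuous.measurable.comp (hr j)).aestronglyMeasurable) (integrable_const _)
    (fun _ => ae_of_all _ fun _ => f.norm_coe_le_norm _)
    (ae_of_all _ fun x => (f.continuous.tendsto x).comp (hlim x))

section Grid

def gridPt (j i : ℕ) : ℝ := -j + i / j

/-- Index of the grid point obtained by rounding `x` up to the grid and clamping to `[-j, j]`. -/
def gridIndex (j : ℕ) (x : ℝ) : ℕ := min ⌈j * (x + j)⌉₊ (2 * j ^ 2)

lemma gridPt_sub_gridPt (j a b : ℕ) : gridPt j b - gridPt j a = ((b : ℝ) - a) / j := by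
  simp only [gridPt]
  ring

lemma measurable_gridIndex (j : ℕ) : Measurable (gridIndex j) := by
  unfold gridIndex
  fun_prop

lemma gridIndex_lt (j : ℕ) (x : ℝ) : gridIndex j x < 2 * j ^ 2 + 1 :=
  Nat.lt_succ_of_le (min_le_right _ _)

lemma abs_gridPt_gridIndex_sub_le {j : ℕ} {x : ℝ} (hx : |x| ≤ j) :
    |gridPt j (gridIndex j x) - x| ≤ (j : ℝ)⁻¹ := by
  rcases Nat.eq_zero_or_pos j with rfl | hj
  · simp_all [gridPt, gridIndex]
  have hj' : (0 : ℝ) < j := Nat.cast_pos.2 hj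
  obtain ⟨hxl, hxr⟩ := abs_le.1 hx
  have ha : 0 ≤ (j : ℝ) * (x + j) := mul_nonneg hj'.le (by linarith)
  have hceil : ⌈(j : ℝ) * (x + j)⌉₊ ≤ 2 * j ^ 2 := Nat.ceil_le.2 (by push_cast; nlinarith)
  have hgap : gridPt j (gridIndex j x) - x = (⌈(j : ℝ) * (x + j)⌉₊ - j * (x + j)) / j := by
    rw [gridIndex, min_eq_left hceil, gridPt]
    field_simp
    ring
  rw [hgap, abs_of_nonneg (div_nonneg (sub_nonneg.2 (Nat.le_ceil _)) hj'.le), inv_eq_one_div]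
  gcongr
  linarith [Nat.ceil_lt_add_one ha]

lemma abs_gridPt_sub_le {j a b : ℕ} (hab : a ≤ b) (hba : b ≤ a + 1) :
    |gridPt j b - gridPt j a| ≤ (j : ℝ)⁻¹ := by
  have h₀ : (a : ℝ) ≤ b := Nat.cast_le.2 hab
  have h₁ : (b : ℝ) ≤ a + 1 := by exact_mod_cast hba
  rw [gridPt_sub_gridPt, abs_of_nonneg (div_nonneg (by linarith) j.cast_nonneg), inv_eq_one_div]
  exact div_le_div_of_nonneg_right (by linarith) j.cast_nonneg

lemma tendsto_gridPt_gridIndex (x : ℝ) :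
    Tendsto (fun j => gridPt j (gridIndex j x)) atTop (𝓝 x) := by
  refine tendsto_iff_dist_tendsto_zero.2 (squeeze_zero' (Eventually.of_forall fun j => dist_nonneg)
    ?_ tendsto_inv_atTop_nhds_zero_nat)
  filter_upwards [eventually_ge_atTop ⌈|x|⌉₊] with j hj
  exact abs_gridPt_gridIndex_sub_le (Nat.ceil_le.1 hj)

end Grid

section Discretization

variable (μ : Measure ℝ)

def gridWeight (j i : ℕ) : ℝ := μ.real (gridIndex j ⁻¹' {i})

def sampleWeight (j : ℕ) : ℕ → ℝ := mixUniform (j : ℝ)⁻¹ (2 * j ^ 2 + 1) (gridWeight μ j)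

lemma inv_div_le_sampleWeight (j i : ℕ) :
    (j : ℝ)⁻¹ / (2 * j ^ 2 + 1 : ℕ) ≤ sampleWeight μ j i :=
  div_le_mixUniform (Nat.cast_inv_le_one j) measureReal_nonneg

lemma sampleWeight_nonneg (j i : ℕ) : 0 ≤ sampleWeight μ j i :=
  (by positivity : (0 : ℝ) ≤ (j : ℝ)⁻¹ / (2 * j ^ 2 + 1 : ℕ)).trans (inv_div_le_sampleWeight μ j i)

variable {j n : ℕ}

lemma one_le_mul_sampleWeight (hj : 1 ≤ j) (hn : j * (2 * j ^ 2 + 1) ≤ n) (i : ℕ) :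
    1 ≤ n * sampleWeight μ j i := by
  have hj' : (j : ℝ) ≠ 0 := Nat.cast_ne_zero.2 (by omega)
  have hn' : (j : ℝ) * (2 * j ^ 2 + 1 : ℕ) ≤ n := by exact_mod_cast hn
  calc (1 : ℝ) = (j * (2 * j ^ 2 + 1 : ℕ)) * ((j : ℝ)⁻¹ / (2 * j ^ 2 + 1 : ℕ)) := by
        field_simp
    _ ≤ n * sampleWeight μ j i :=
        mul_le_mul hn' (inv_div_le_sampleWeight μ j i) (by positivity) n.cast_nonneg

variable [IsProbabilityMeasure μ]

lemma integral_comp_gridPt_gridIndex (j : ℕ) (f : ℝ → ℝ) :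
    ∫ x, f (gridPt j (gridIndex j x)) ∂μ
      = ∑ i ∈ range (2 * j ^ 2 + 1), gridWeight μ j i * f (gridPt j i) :=
  integral_comp_eq_sum_measureReal μ (measurable_gridIndex j) (gridIndex_lt j)
    fun i => f (gridPt j i)

lemma sum_gridWeight (j : ℕ) : ∑ i ∈ range (2 * j ^ 2 + 1), gridWeight μ j i = 1 := by
  simpa using (integral_comp_gridPt_gridIndex μ j fun _ => 1).symm

lemma sum_sampleWeight (j : ℕ) : ∑ i ∈ range (2 * j ^ 2 + 1), sampleWeight μ j i = 1 :=
  sum_mixUniform (Nat.succ_ne_zero _) (sum_gridWeight μ j)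

lemma abs_average_sampleIndex_sub_integral_le (hj : 1 ≤ j) (hn : j * (2 * j ^ 2 + 1) ≤ n)
    (f : BoundedContinuousFunction ℝ ℝ) :
    |1 / n * ∑ k ∈ Icc 1 n, f (gridPt j (sampleIndex (sampleWeight μ j) n k))
      - ∫ x, f (gridPt j (gridIndex j x)) ∂μ| ≤ 3 * ‖f‖ / j := by
  set M := 2 * j ^ 2 + 1
  set g : ℕ → ℝ := fun i => f (gridPt j i)
  have hg : ∀ i, |g i| ≤ ‖f‖ := fun i => f.norm_coe_le_norm _
  have hj' : (0 : ℝ) < j := Nat.cast_pos.2 hj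
  have hn' : (j : ℝ) * M ≤ n := by exact_mod_cast hn
  have hnpos : (0 : ℝ) < n := Nat.cast_pos.2 (lt_of_lt_of_le (by positivity) hn)
  have hsampling := abs_sum_sampleIndex_sub_le (n := n) (sampleWeight_nonneg μ j)
    (sum_sampleWeight μ j) hg
  have hmixing := abs_sum_mixUniform_mul_sub_le (inv_nonneg.2 hj'.le) (fun _ => measureReal_nonneg)
    (sum_gridWeight μ j) hg
  have haverage : |1 / n * ∑ k ∈ Icc 1 n, g (sampleIndex (sampleWeight μ j) n k)
      - ∑ i ∈ range M, sampleWeight μ j i * g i| ≤ ‖f‖ / j := by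
    rw [show ∀ a b : ℝ, 1 / n * a - b = (a - n * b) / n by intros; field_simp, abs_div,
      abs_of_pos hnpos, div_le_div_iff₀ hnpos hj']
    nlinarith [norm_nonneg f]
  rw [integral_comp_gridPt_gridIndex]
  calc _ ≤ ‖f‖ / j + 2 * (j : ℝ)⁻¹ * ‖f‖ :=
        (abs_sub_le _ _ _).trans (add_le_add haverage hmixing)
    _ = 3 * ‖f‖ / j := by ring

lemma abs_gridPt_sampleIndex_min_succ_sub_le (hj : 1 ≤ j) (hn : j * (2 * j ^ 2 + 1) ≤ n)
    (k : ℕ) : |gridPt j (sampleIndex (sampleWeight μ j) n (min (k + 1) n))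
      - gridPt j (sampleIndex (sampleWeight μ j) n (min k n))| ≤ (j : ℝ)⁻¹ := by
  refine abs_gridPt_sub_le
    (sampleIndex_mono (sum_sampleWeight μ j) (by omega) (min_le_right _ _)) ?_
  rcases le_or_gt n k with hk | hk
  · rw [min_eq_right hk, min_eq_right (by omega)]
    omega
  · rw [min_eq_left hk, min_eq_left hk.le]
    exact sampleIndex_succ_le (sampleWeight_nonneg μ j) (sum_sampleWeight μ j)
      (one_le_mul_sampleWeight μ hj hn) hk.le

end Discretization

lemma tendsto_findGreatest_le_atTop (φ : ℕ → ℕ) :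
    Tendsto (fun N => Nat.findGreatest (fun j => φ j ≤ N) N) atTop atTop :=
  tendsto_atTop_atTop.2 fun j => ⟨max j (φ j), fun _ hN =>
    Nat.le_findGreatest (le_of_max_le_left hN) (le_of_max_le_right hN)⟩

/-- The largest grid level `j` whose required sample size `j (2 j² + 1)` is at most `N - 1`. -/
def level (N : ℕ) : ℕ := Nat.findGreatest (fun j => j * (2 * j ^ 2 + 1) + 1 ≤ N) N

lemma tendsto_level : Tendsto level atTop atTop :=
  tendsto_findGreatest_le_atTop _

lemma level_mul_le {N : ℕ} (h : level N ≠ 0) : level N * (2 * level N ^ 2 + 1) ≤ N - 1 := by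
  have : level N * (2 * level N ^ 2 + 1) + 1 ≤ N :=
    Nat.findGreatest_of_ne_zero (P := fun j => j * (2 * j ^ 2 + 1) + 1 ≤ N) rfl h
  omega

def array (μ : Measure ℝ) (N k : ℕ) : ℝ :=
  gridPt (level N) (sampleIndex (sampleWeight μ (level N)) (N - 1) (min k (N - 1)))

lemma abs_array_succ_sub_le (μ : Measure ℝ) [IsProbabilityMeasure μ] {N : ℕ} (h : 1 ≤ level N)
    (k : ℕ) :
    |array μ N (k + 1) - array μ N k| ≤ (level N : ℝ)⁻¹ :=
  abs_gridPt_sampleIndex_min_succ_sub_le μ h (level_mul_le (by omega)) k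

lemma abs_average_array_sub_integral_le (μ : Measure ℝ) [IsProbabilityMeasure μ] {N : ℕ}
    (h : 1 ≤ level N) (f : BoundedContinuousFunction ℝ ℝ) :
    |1 / ((N : ℝ) - 1) * ∑ k ∈ Icc 1 (N - 1), f (array μ N k)
      - ∫ x, f (gridPt (level N) (gridIndex (level N) x)) ∂μ| ≤ 3 * ‖f‖ / level N := by
  have hN := level_mul_le (by omega : level N ≠ 0)
  have hN1 : 1 ≤ N := by
    have : 0 < level N * (2 * level N ^ 2 + 1) := by positivity
    omega
  rw [← Nat.cast_pred hN1]
  convert abs_average_sampleIndex_sub_integral_le μ h hN f using 5 with k hk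
  rw [array, min_eq_left (mem_Icc.1 hk).2]

end

end SlowlyVaryingArray

open SlowlyVaryingArray

/-- For any probability law `μ_T` on ℝ there is a triangular array with vanishing mesh whose
empirical measures converge weakly to `μ_T`. -/
theorem exists_slowly_varying_array (μT : Measure ℝ) [IsProbabilityMeasure μT] :
    ∃ σ : ℕ → ℕ → ℝ,
      -- (1) vanishing mesh
      (∀ ε > (0 : ℝ), ∃ N₀, ∀ N, N₀ ≤ N → ∀ k, 2 ≤ k → k ≤ N → |σ N k - σ N (k - 1)| < ε) ∧
      -- (2) empirical convergence: ν_N = (1/(N−1)) Σ_{k=1}^{N−1} δ_{σ_{k,N}} ⇒ μ_T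
      (∀ f : BoundedContinuousFunction ℝ ℝ,
        Tendsto (fun N : ℕ => (1 / ((N : ℝ) - 1)) * ∑ k ∈ Finset.Icc 1 (N - 1), f (σ N k))
          atTop (nhds (∫ x, f x ∂μT))) := by
  refine ⟨array μT, fun ε hε => ?_, fun f => ?_⟩
  · obtain ⟨N₀, hN₀⟩ := eventually_atTop.1
      ((tendsto_level.eventually_ge_atTop 1).and (tendsto_level.eventually_gt_atTop ⌈ε⁻¹⌉₊))
    refine ⟨N₀, fun N hN k hk _ => ?_⟩
    obtain ⟨hlevel, hlevel_ε⟩ := hN₀ N hN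
    obtain ⟨k, rfl⟩ : ∃ k', k = k' + 1 := ⟨k - 1, by omega⟩
    refine (abs_array_succ_sub_le μT hlevel k).trans_lt (inv_lt_of_inv_lt₀ hε ?_)
    exact (Nat.le_ceil _).trans_lt (Nat.cast_lt.2 hlevel_ε)
  · have hrounded := (tendsto_integral_comp_of_tendsto μT f
      (fun j => (measurable_from_nat (f := gridPt j)).comp (measurable_gridIndex j))
      tendsto_gridPt_gridIndex).comp tendsto_level
    refine hrounded.congr_dist (squeeze_zero' (Eventually.of_forall fun _ => dist_nonneg) ?_
      (((tendsto_const_nhds (x := 3 * ‖f‖)).div_atTop tendsto_natCast_atTop_atTop).comp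
        tendsto_level))
    filter_upwards [tendsto_level.eventually_ge_atTop 1] with N hN
    rw [dist_comm, Real.dist_eq]
    exact abs_average_array_sub_integral_le μT hN f
end
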